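/- arXiv:2201.12974 — 4 statements merged into one kernel-verified Lean document; each statement's English description precedes it below -/
import Mathlib

section
/- For 1 ≤ α_1 ≤ α_2, the set {x ∈ (0,1) : the partial quotients a_n(x) are non-decreasing and α_1 ≤ liminf_{n→∞} (log a_n(x))/(log n) ≤ α_2} has Hausdorff dimension at most (α_2 - 1)/(2α_1). -/
/-!
Fix `s > (α₂ - 1) / (2α₁)` and exponents `θ₁ < α₁`, `θ₂ > α₂` with `θ₂ < 1 + 2θ₁s`. A point of
the set has `aₙ ≥ n ^ θ₁ / C` for all `n` (some `C`), and `aₙ ≤ n ^ θ₂` for infinitely many `n`.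
At such an `n`, monotonicity bounds all of `a₁, …, aₙ` by `n ^ θ₂`, so `x` lies in one of at most
`binom(⌊n ^ θ₂⌋ + n, n) ≤ (2 n ^ θ₂)ⁿ / n!` cylinders of rank `n`, each of diameter at most
`∏ aᵢ⁻² ≤ (Cⁿ / n! ^ θ₁)²`. The resulting `s`-dimensional sums are `≈ n ^ ((θ₂ - 1 - 2θ₁s) n)`,
hence summable, and a Hausdorff–Cantelli argument gives `μH[s] = 0`.
-/

open Filter MeasureTheory Set

/-- The Gauss map. -/
noncomputable def gaussMap (x : ℝ) : ℝ := Int.fract x⁻¹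

/-- The `n`-th partial quotient (for `n ≥ 1`) of the continued fraction expansion of `x`. -/
noncomputable def cfA (n : ℕ) (x : ℝ) : ℕ := ⌊(gaussMap^[n - 1] x)⁻¹⌋₊

/-- The set `Λ` of points of `(0,1)` whose partial quotients are non-decreasing. -/
noncomputable def Lam : Set ℝ :=
  {x | x ∈ Set.Ioo (0:ℝ) 1 ∧ ∀ n : ℕ, 1 ≤ n → cfA n x ≤ cfA (n + 1) x}

open scoped ENNReal Topology
open Metric

lemma abs_inv_add_sub_inv_add_le {a u v : ℝ} (ha : 0 < a) (hu : 0 ≤ u) (hv : 0 ≤ v) :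
    |(a + u)⁻¹ - (a + v)⁻¹| ≤ |u - v| / a ^ 2 := by
  have hau : 0 < a + u := by linarith
  have hav : 0 < a + v := by linarith
  rw [inv_sub_inv hau.ne' hav.ne', abs_div, abs_of_pos (mul_pos hau hav), abs_sub_comm,
    show a + u - (a + v) = u - v by ring]
  exact div_le_div_of_nonneg_left (abs_nonneg _) (by positivity) (by nlinarith)

/-- Monotone sequences bounded by `M` inject into `n`-subsets of `[0, M + n)` via `aᵢ ↦ aᵢ + i`. -/
lemma card_le_choose_of_monotone {n M : ℕ} (S : Finset (Fin n → ℕ))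
    (hS : ∀ a ∈ S, Monotone a ∧ ∀ i, a i ≤ M) : S.card ≤ (M + n).choose n := by
  have hsm : ∀ a ∈ S, StrictMono fun i : Fin n => a i + i :=
    fun a ha => (hS a ha).1.add_strictMono Fin.val_strictMono
  calc S.card ≤ ((Finset.range (M + n)).powersetCard n).card := by
        refine Finset.card_le_card_of_injOn (fun a => Finset.univ.image fun i => a i + (i : ℕ))
          (fun a ha => ?_) (fun a ha b hb hab => ?_)
        · rw [Finset.mem_coe, Finset.mem_powersetCard,
            Finset.card_image_of_injective _ (hsm a ha).injective, Finset.card_fin]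
          refine ⟨fun k hk => ?_, rfl⟩
          obtain ⟨i, -, rfl⟩ := Finset.mem_image.1 hk
          have := (hS a ha).2 i
          rw [Finset.mem_range]
          omega
        · have hrange := congrArg (fun t : Finset ℕ => (t : Set ℕ)) hab
          simp only [Finset.coe_image, Finset.coe_univ, Set.image_univ] at hrange
          funext i
          simpa using congrFun (((hsm a ha).range_inj (hsm b hb)).1 hrange) i
    _ = (M + n).choose n := by rw [Finset.card_powersetCard, Finset.card_range]

lemma prod_rpow_succ_eq_factorial_rpow (n : ℕ) (θ : ℝ) :
    ∏ i : Fin n, ((i : ℕ) + 1 : ℝ) ^ θ = (n.factorial : ℝ) ^ θ := by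
  rw [Real.finsetProd_rpow _ _ fun i _ => by positivity,
    Fin.prod_univ_eq_prod_range (fun i => (i : ℝ) + 1), ← Finset.prod_range_add_one_eq_factorial]
  push_cast
  rfl

lemma sub_le_log_factorial (n : ℕ) : n * Real.log n - n ≤ Real.log n.factorial := by
  have h := Real.pow_div_factorial_le_exp (n : ℝ) (Nat.cast_nonneg n) n
  rcases n.eq_zero_or_pos with rfl | hn
  · simp
  have hn' : (0 : ℝ) < n := by exact_mod_cast hn
  rw [← Real.log_le_log_iff (by positivity) (Real.exp_pos _), Real.log_exp,
    Real.log_div (by positivity) (by positivity), Real.log_pow] at h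
  linarith

/-- By `n! ≥ (n / e)ⁿ` the left side is at most `(K n ^ (θ₂ - 1 - 2θ₁s))ⁿ` for a constant `K`. -/
lemma eventually_pow_div_factorial_mul_rpow_le {θ₁ θ₂ C s : ℝ} (hθ₁ : 0 ≤ θ₁) (hC : 0 < C)
    (hs : 0 ≤ s) (hθ : θ₂ < 1 + 2 * θ₁ * s) :
    ∀ᶠ n : ℕ in atTop, (2 * (n : ℝ) ^ θ₂) ^ n / n.factorial *
      ((C ^ n / (n.factorial : ℝ) ^ θ₁) ^ 2) ^ s ≤ (1 / 2) ^ n := by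
  set p := 1 + 2 * θ₁ * s
  have hp : 0 ≤ p := by positivity
  have hlog : Tendsto (fun n : ℕ => Real.log n) atTop atTop :=
    Real.tendsto_log_atTop.comp tendsto_natCast_atTop_atTop
  filter_upwards [eventually_ge_atTop 1, hlog.eventually_ge_atTop
    ((2 * Real.log 2 + 2 * s * Real.log C + p) / (p - θ₂))] with n hn hlogn
  rw [div_le_iff₀ (by linarith)] at hlogn
  have hn' : (0 : ℝ) < n := by exact_mod_cast hn
  have hF : (0 : ℝ) < n.factorial := by exact_mod_cast n.factorial_pos
  have hlogY : Real.log ((2 * (n : ℝ) ^ θ₂) ^ n / n.factorial *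
      ((C ^ n / (n.factorial : ℝ) ^ θ₁) ^ 2) ^ s) = n * (Real.log 2 + θ₂ * Real.log n) -
        Real.log n.factorial + s * (2 * (n * Real.log C - θ₁ * Real.log n.factorial)) := by
    rw [Real.log_mul (by positivity) (by positivity), Real.log_div (by positivity) hF.ne',
      Real.log_pow, Real.log_mul two_ne_zero (by positivity), Real.log_rpow hn',
      Real.log_rpow (by positivity), Real.log_pow, Real.log_div (by positivity) (by positivity),
      Real.log_pow, Real.log_rpow hF]
    push_cast
    ring
  rw [← Real.log_le_log_iff (by positivity) (by positivity), hlogY, Real.log_pow, one_div,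
    Real.log_inv]
  have h₁ := mul_le_mul_of_nonneg_left (sub_le_log_factorial n) hp
  have h₂ := mul_le_mul_of_nonneg_left hlogn hn'.le
  linarith

/-- Hausdorff–Cantelli lemma. The tails `⋃_{n ≥ m} ⋃ᵢ U n i` cover the limsup, and each of their
pieces has `diam ^ s` at most the tail sum. -/
theorem hausdorffMeasure_limsup_eq_zero {X : Type*} [EMetricSpace X] [MeasurableSpace X]
    [BorelSpace X] {ι : ℕ → Type*} [∀ n, Countable (ι n)] {s : ℝ} (hs : 0 < s)
    (U : ∀ n, ι n → Set X) (hU : ∑' n, ∑' i, ediam (U n i) ^ s ≠ ∞) :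
    μH[s] (limsup (fun n => ⋃ i, U n i) atTop) = 0 := by
  set tail : ℕ → ℝ≥0∞ := fun m => ∑' k, ∑' i, ediam (U (k + m) i) ^ s
  have htail : Tendsto tail atTop (𝓝 0) := ENNReal.tendsto_sum_nat_add _ hU
  refine le_antisymm ?_ zero_le
  calc μH[s] (limsup (fun n => ⋃ i, U n i) atTop)
      ≤ liminf (fun m => ∑' j : Σ k, ι (k + m), ediam (U (j.1 + m) j.2) ^ s) atTop :=
        Measure.hausdorffMeasure_le_liminf_tsum s _ (fun m => tail m ^ s⁻¹) ?_
          (fun m (j : Σ k, ι (k + m)) => U (j.1 + m) j.2) ?_ ?_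
    _ = liminf tail atTop := by simp only [tail, ENNReal.tsum_sigma']
    _ = 0 := htail.liminf_eq
  · have h := ((ENNReal.continuous_rpow_const (y := s⁻¹)).tendsto 0).comp htail
    rwa [ENNReal.zero_rpow_of_pos (inv_pos.2 hs)] at h
  · refine Eventually.of_forall fun m ⟨k, i⟩ => ?_
    rw [ENNReal.le_rpow_inv_iff hs]
    exact (ENNReal.le_tsum i).trans
      (ENNReal.le_tsum (f := fun k => ∑' i, ediam (U (k + m) i) ^ s) k)
  · refine Eventually.of_forall fun m x hx => ?_
    obtain ⟨n, hn, hxn⟩ := (mem_limsup_iff_frequently_mem.1 hx).forall_exists_of_atTop m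
    obtain ⟨k, rfl⟩ := Nat.exists_eq_add_of_le' hn
    obtain ⟨i, hi⟩ := mem_iUnion.1 hxn
    exact mem_iUnion.2 ⟨⟨k, i⟩, hi⟩

noncomputable def logGrowthLiminf (u : ℕ → ℕ) : EReal :=
  liminf (fun n : ℕ => ((Real.log (u n) / Real.log n : ℝ) : EReal)) atTop

lemma eventually_rpow_le_of_lt_logGrowthLiminf {u : ℕ → ℕ} {θ : ℝ} (hθ : 0 ≤ θ)
    (h : (θ : EReal) < logGrowthLiminf u) : ∀ᶠ n : ℕ in atTop, (n : ℝ) ^ θ ≤ u n := by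
  filter_upwards [eventually_lt_of_lt_liminf h, eventually_ge_atTop 2] with n hn hn2
  have hlog : 0 < Real.log n := Real.log_pos (by exact_mod_cast hn2)
  have hθu := (lt_div_iff₀ hlog).1 (EReal.coe_lt_coe_iff.1 hn)
  have hu : (0 : ℝ) < u n := by
    by_contra! hu
    rw [le_antisymm hu (Nat.cast_nonneg _), Real.log_zero] at hθu
    linarith [mul_nonneg hθ hlog.le]
  rw [← Real.log_le_log_iff (by positivity) hu, Real.log_rpow (by positivity)]
  exact hθu.le

lemma frequently_le_rpow_of_logGrowthLiminf_lt {u : ℕ → ℕ} {θ : ℝ}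
    (h : logGrowthLiminf u < θ) : ∃ᶠ n : ℕ in atTop, (u n : ℝ) ≤ n ^ θ := by
  refine ((frequently_lt_of_liminf_lt (by isBoundedDefault) h).and_eventually
    (eventually_ge_atTop 2)).mono fun n ⟨hn, hn2⟩ => ?_
  have hlog : 0 < Real.log n := Real.log_pos (by exact_mod_cast hn2)
  have huθ := (div_lt_iff₀ hlog).1 (EReal.coe_lt_coe_iff.1 hn)
  rcases (u n).eq_zero_or_pos with hu | hu
  · rw [hu, Nat.cast_zero]
    positivity
  rw [← Real.log_le_log_iff (by positivity) (by positivity), Real.log_rpow (by positivity)]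
  exact huθ.le

lemma gaussMap_mem_Ico (x : ℝ) : gaussMap x ∈ Ico (0 : ℝ) 1 :=
  ⟨Int.fract_nonneg _, Int.fract_lt_one _⟩

lemma inv_cfA_one_add_gaussMap {x : ℝ} (hx : 0 < x) : ((cfA 1 x : ℝ) + gaussMap x)⁻¹ = x := by
  rw [cfA, gaussMap, Nat.sub_self, Function.iterate_zero_apply,
    natCast_floor_eq_intCast_floor (inv_pos.2 hx).le, Int.floor_add_fract, inv_inv]

lemma pos_of_one_le_cfA_one {x : ℝ} (hx : 0 ≤ x) (h : 1 ≤ cfA 1 x) : 0 < x :=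
  hx.lt_of_ne fun h0 => by simp [← h0, cfA] at h

lemma cfA_succ_gaussMap (n : ℕ) (x : ℝ) : cfA (n + 1) (gaussMap x) = cfA (n + 2) x := by
  simp only [cfA, Nat.add_sub_cancel, Nat.reduceSubDiff, Function.iterate_succ_apply]

noncomputable def cfPrefix (n : ℕ) (x : ℝ) : Fin n → ℕ := fun i => cfA (i + 1) x

lemma cfPrefix_succ (n : ℕ) (x : ℝ) :
    cfPrefix (n + 1) x = Fin.cons (cfA 1 x) (cfPrefix n (gaussMap x)) := by
  ext i
  cases i using Fin.cases with
  | zero => rfl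
  | succ i => simp [cfPrefix, cfA_succ_gaussMap]

def cfCylinder (n : ℕ) (a : Fin n → ℕ) : Set ℝ := {x ∈ Ico 0 1 | cfPrefix n x = a}

lemma abs_sub_le_prod_of_cfPrefix_eq : ∀ {n : ℕ} {x y : ℝ}, x ∈ Ico (0 : ℝ) 1 →
    y ∈ Ico (0 : ℝ) 1 → cfPrefix n x = cfPrefix n y → (∀ i, 1 ≤ cfPrefix n x i) →
    |x - y| ≤ ∏ i, ((cfPrefix n x i : ℝ) ^ 2)⁻¹
  | 0, x, y, hx, hy, _, _ => by
    rw [Fin.prod_univ_zero, abs_sub_le_iff]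
    constructor <;> linarith [hx.1, hx.2, hy.1, hy.2]
  | n + 1, x, y, hx, hy, hxy, hpos => by
    rw [cfPrefix_succ, cfPrefix_succ, Fin.cons_inj] at hxy
    rw [cfPrefix_succ] at hpos ⊢
    have hx' := inv_cfA_one_add_gaussMap (pos_of_one_le_cfA_one hx.1 (hpos 0))
    have hy' := inv_cfA_one_add_gaussMap (pos_of_one_le_cfA_one hy.1 (hxy.1 ▸ hpos 0))
    rw [← hxy.1] at hy'
    set a := cfA 1 x
    have ha : (1 : ℝ) ≤ a := by exact_mod_cast hpos 0
    have ih := abs_sub_le_prod_of_cfPrefix_eq (gaussMap_mem_Ico x) (gaussMap_mem_Ico y) hxy.2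
      fun i => by simpa using hpos i.succ
    rw [Fin.prod_univ_succ]
    simp only [Fin.cons_zero, Fin.cons_succ]
    calc |x - y| = |((a : ℝ) + gaussMap x)⁻¹ - ((a : ℝ) + gaussMap y)⁻¹| := by rw [hx', hy']
      _ ≤ |gaussMap x - gaussMap y| / (a : ℝ) ^ 2 :=
        abs_inv_add_sub_inv_add_le (by linarith) (gaussMap_mem_Ico x).1 (gaussMap_mem_Ico y).1
      _ ≤ (∏ i, ((cfPrefix n (gaussMap x) i : ℝ) ^ 2)⁻¹) / (a : ℝ) ^ 2 := by gcongr
      _ = _ := div_eq_inv_mul _ _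

lemma ediam_cfCylinder_le {n : ℕ} {a : Fin n → ℕ} (ha : ∀ i, 1 ≤ a i) :
    ediam (cfCylinder n a) ≤ ENNReal.ofReal (∏ i, ((a i : ℝ) ^ 2)⁻¹) := by
  refine ediam_le fun x ⟨hx, hxa⟩ y ⟨hy, hya⟩ => ?_
  rw [edist_dist, Real.dist_eq, ← hxa]
  exact ENNReal.ofReal_le_ofReal
    (abs_sub_le_prod_of_cfPrefix_eq hx hy (hxa.trans hya.symm) (hxa ▸ ha))

noncomputable def admissiblePrefixes (θ₁ θ₂ C : ℝ) (n : ℕ) : Finset (Fin n → ℕ) :=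
  {a ∈ Fintype.piFinset fun _ => Finset.Icc 1 ⌊(n : ℝ) ^ θ₂⌋₊ |
    Monotone a ∧ ∀ i : Fin n, ((i : ℕ) + 1 : ℝ) ^ θ₁ ≤ C * a i}

lemma mem_admissiblePrefixes {θ₁ θ₂ C : ℝ} {n : ℕ} {a : Fin n → ℕ} :
    a ∈ admissiblePrefixes θ₁ θ₂ C n ↔ (∀ i, 1 ≤ a i ∧ a i ≤ ⌊(n : ℝ) ^ θ₂⌋₊) ∧ Monotone a ∧
      ∀ i : Fin n, ((i : ℕ) + 1 : ℝ) ^ θ₁ ≤ C * a i := by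
  simp only [admissiblePrefixes, Finset.mem_filter, Fintype.mem_piFinset, Finset.mem_Icc]

lemma card_admissiblePrefixes_le (θ₁ C : ℝ) {θ₂ : ℝ} (hθ₂ : 1 ≤ θ₂) (n : ℕ) :
    ((admissiblePrefixes θ₁ θ₂ C n).card : ℝ) ≤ (2 * (n : ℝ) ^ θ₂) ^ n / n.factorial := by
  set M := ⌊(n : ℝ) ^ θ₂⌋₊
  have hcard : (admissiblePrefixes θ₁ θ₂ C n).card ≤ (M + n).choose n := by
    refine card_le_choose_of_monotone _ fun a ha => ?_
    rw [mem_admissiblePrefixes] at ha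
    exact ⟨ha.2.1, fun i => (ha.1 i).2⟩
  have hn : (n : ℝ) ≤ (n : ℝ) ^ θ₂ := by
    rcases n.eq_zero_or_pos with rfl | hn
    · simpa using Real.rpow_nonneg le_rfl θ₂
    · exact Real.self_le_rpow_of_one_le (by exact_mod_cast hn) hθ₂
  have hM : ((M + n : ℕ) : ℝ) ≤ 2 * (n : ℝ) ^ θ₂ := by
    push_cast
    linarith [Nat.floor_le (Real.rpow_nonneg n.cast_nonneg θ₂)]
  calc ((admissiblePrefixes θ₁ θ₂ C n).card : ℝ) ≤ ((M + n).choose n : ℝ) := mod_cast hcard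
    _ ≤ ((M + n : ℕ) : ℝ) ^ n / n.factorial := Nat.choose_le_pow_div n _
    _ ≤ (2 * (n : ℝ) ^ θ₂) ^ n / n.factorial := by gcongr

lemma prod_inv_sq_le_of_mem_admissiblePrefixes {θ₁ θ₂ C : ℝ} {n : ℕ} {a : Fin n → ℕ}
    (ha : a ∈ admissiblePrefixes θ₁ θ₂ C n) :
    ∏ i, ((a i : ℝ) ^ 2)⁻¹ ≤ (C ^ n / (n.factorial : ℝ) ^ θ₁) ^ 2 := by
  rw [mem_admissiblePrefixes] at ha
  rw [← prod_rpow_succ_eq_factorial_rpow, show C ^ n = ∏ _i : Fin n, C by simp,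
    ← Finset.prod_div_distrib, ← Finset.prod_pow]
  refine Finset.prod_le_prod (fun i _ => by positivity) fun i _ => ?_
  have hai : (0 : ℝ) < a i := by exact_mod_cast (ha.1 i).1
  rw [← inv_pow]
  refine pow_le_pow_left₀ (by positivity) ?_ 2
  rw [le_div_iff₀ (by positivity), inv_mul_le_iff₀ hai, mul_comm]
  exact ha.2.2 i

lemma ediam_cfCylinder_le_of_mem_admissiblePrefixes {θ₁ θ₂ C : ℝ} {n : ℕ} {a : Fin n → ℕ}
    (ha : a ∈ admissiblePrefixes θ₁ θ₂ C n) :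
    ediam (cfCylinder n a) ≤ ENNReal.ofReal ((C ^ n / (n.factorial : ℝ) ^ θ₁) ^ 2) :=
  (ediam_cfCylinder_le fun i => (mem_admissiblePrefixes.1 ha).1 i |>.1).trans
    (ENNReal.ofReal_le_ofReal (prod_inv_sq_le_of_mem_admissiblePrefixes ha))

lemma hausdorffMeasure_limsup_cfCylinder_eq_zero {θ₁ θ₂ C s : ℝ} (hθ₁ : 0 ≤ θ₁) (hθ₂ : 1 ≤ θ₂)
    (hC : 0 < C) (hs : 0 < s) (hθ : θ₂ < 1 + 2 * θ₁ * s) :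
    μH[s] (limsup (fun n => ⋃ a : admissiblePrefixes θ₁ θ₂ C n, cfCylinder n a) atTop) = 0 := by
  set r : ℕ → ℝ := fun n => (C ^ n / (n.factorial : ℝ) ^ θ₁) ^ 2
  set b : ℕ → ℝ := fun n => (2 * (n : ℝ) ^ θ₂) ^ n / n.factorial * r n ^ s
  have hb : Summable b := by
    refine (summable_geometric_of_lt_one (by norm_num) (by norm_num : (1 / 2 : ℝ) < 1))
      |>.of_norm_bounded_eventually_nat ?_
    filter_upwards [eventually_pow_div_factorial_mul_rpow_le hθ₁ hC hs.le hθ] with n hn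
    rwa [Real.norm_of_nonneg (by positivity)]
  refine hausdorffMeasure_limsup_eq_zero hs _
    (ne_top_of_le_ne_top (ENNReal.ofReal_ne_top (r := ∑' n, b n)) ?_)
  rw [ENNReal.ofReal_tsum_of_nonneg (fun n => by positivity) hb]
  refine ENNReal.tsum_le_tsum fun n => ?_
  calc ∑' a : admissiblePrefixes θ₁ θ₂ C n, ediam (cfCylinder n a) ^ s
      ≤ ∑' _a : admissiblePrefixes θ₁ θ₂ C n, ENNReal.ofReal (r n ^ s) := by
        refine ENNReal.tsum_le_tsum fun a => ?_
        rw [← ENNReal.ofReal_rpow_of_nonneg (by positivity) hs.le]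
        exact ENNReal.rpow_le_rpow (ediam_cfCylinder_le_of_mem_admissiblePrefixes a.2) hs.le
    _ = ENNReal.ofReal ((admissiblePrefixes θ₁ θ₂ C n).card * r n ^ s) := by
        rw [tsum_fintype, Finset.sum_const, Finset.card_univ, Fintype.card_coe, nsmul_eq_mul,
          ENNReal.ofReal_mul (by positivity), ENNReal.ofReal_natCast]
    _ ≤ ENNReal.ofReal (b n) :=
        ENNReal.ofReal_le_ofReal
          (mul_le_mul_of_nonneg_right (card_admissiblePrefixes_le θ₁ C hθ₂ n) (by positivity))

/-- Taking `C ≥ N ^ θ₁` absorbs the indices `n < N` before `n ^ θ₁ ≤ aₙ` sets in; the shift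
`C + 1` keeps the constant positive. -/
lemma exists_mem_limsup_cfCylinder {θ₁ θ₂ : ℝ} (hθ₁ : 0 ≤ θ₁) {x : ℝ} (hx : x ∈ Lam)
    (h₁ : (θ₁ : EReal) < logGrowthLiminf (cfA · x)) (h₂ : logGrowthLiminf (cfA · x) < θ₂) :
    ∃ C : ℕ,
      x ∈ limsup (fun n => ⋃ a : admissiblePrefixes θ₁ θ₂ (C + 1) n, cfCylinder n a) atTop := by
  obtain ⟨⟨hx0, hx1⟩, hstep⟩ := hx
  have hmono : Monotone fun i => cfA (i + 1) x :=
    monotone_nat_of_le_succ fun i => hstep (i + 1) (Nat.le_add_left 1 i)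
  have hone : ∀ n, 1 ≤ cfA (n + 1) x := fun n =>
    (Nat.le_floor (by simpa using one_le_inv_iff₀.2 ⟨hx0, hx1.le⟩)).trans (hmono n.zero_le)
  obtain ⟨N, hN⟩ := eventually_atTop.1 (eventually_rpow_le_of_lt_logGrowthLiminf hθ₁ h₁)
  obtain ⟨C, hC⟩ := exists_nat_ge ((N : ℝ) ^ θ₁)
  have hlow : ∀ n : ℕ, ((n : ℝ) + 1) ^ θ₁ ≤ (C + 1 : ℕ) * cfA (n + 1) x := by
    intro n
    have ha : (1 : ℝ) ≤ cfA (n + 1) x := by exact_mod_cast hone n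
    rcases le_or_gt N (n + 1) with hn | hn
    · have := hN (n + 1) hn
      push_cast at this ⊢
      nlinarith
    · have : ((n : ℝ) + 1) ^ θ₁ ≤ (N : ℝ) ^ θ₁ :=
        Real.rpow_le_rpow (by positivity) (by exact_mod_cast hn.le) hθ₁
      push_cast
      nlinarith
  refine ⟨C, mem_limsup_iff_frequently_mem.2 <|
    (frequently_le_rpow_of_logGrowthLiminf_lt h₂).mp (Eventually.of_forall fun n hn => ?_)⟩
  refine mem_iUnion.2 ⟨⟨cfPrefix n x, ?_⟩, ⟨hx0.le, hx1⟩, rfl⟩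
  refine mem_admissiblePrefixes.2 ⟨fun i => ⟨hone i, ?_⟩, fun i j hij => hmono hij,
    fun i => by exact_mod_cast hlow i⟩
  obtain ⟨m, rfl⟩ : ∃ m, n = m + 1 := Nat.exists_eq_add_one_of_ne_zero (Fin.pos i).ne'
  exact Nat.le_floor ((Nat.cast_le.2 (hmono (Nat.lt_succ_iff.1 i.2))).trans hn)

lemma hausdorffMeasure_setOf_logGrowthLiminf_eq_zero {α₁ α₂ s : ℝ} (h1 : 1 ≤ α₁)
    (h12 : α₁ ≤ α₂) (hs : (α₂ - 1) / (2 * α₁) < s) :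
    μH[s] {x | x ∈ Lam ∧ α₁ ≤ logGrowthLiminf (cfA · x) ∧ logGrowthLiminf (cfA · x) ≤ α₂} = 0 := by
  have hα₁ : 0 < 2 * α₁ := by linarith
  have hs0 : 0 < s := (div_nonneg (by linarith) hα₁.le).trans_lt hs
  rw [div_lt_iff₀ hα₁] at hs
  obtain ⟨θ₂, hαθ₂, hθ₂⟩ := exists_between (show α₂ < 1 + 2 * α₁ * s by linarith)
  obtain ⟨θ₁, hθ₁, hθα₁⟩ := exists_between
    (show (θ₂ - 1) / (2 * s) < α₁ by rw [div_lt_iff₀ (by positivity)]; linarith)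
  have hθ₁0 : 0 ≤ θ₁ := (div_nonneg (by linarith) (by positivity)).trans hθ₁.le
  rw [div_lt_iff₀ (by positivity)] at hθ₁
  refine measure_mono_null (fun x ⟨hx, hx₁, hx₂⟩ => mem_iUnion.2 <|
      exists_mem_limsup_cfCylinder hθ₁0 hx (hx₁.trans_lt' (by exact_mod_cast hθα₁))
        (hx₂.trans_lt (by exact_mod_cast hαθ₂)))
    (measure_iUnion_null fun C => hausdorffMeasure_limsup_cfCylinder_eq_zero hθ₁0 (by linarith)
      (by positivity) hs0 (by linarith))

/-- For `1 ≤ α₁ ≤ α₂`, the set of `x ∈ Λ` with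
`α₁ ≤ liminf (log aₙ(x))/(log n) ≤ α₂` has Hausdorff dimension at most
`(α₂ - 1)/(2α₁)`. -/
theorem dimH_liminf_between_le (α₁ α₂ : ℝ) (h1 : 1 ≤ α₁) (h12 : α₁ ≤ α₂) :
    dimH {x | x ∈ Lam ∧
        (α₁ : EReal) ≤
          Filter.liminf (fun n : ℕ => ((Real.log (cfA n x) / Real.log n : ℝ) : EReal)) atTop ∧
        Filter.liminf (fun n : ℕ => ((Real.log (cfA n x) / Real.log n : ℝ) : EReal)) atTop ≤
          (α₂ : EReal)} ≤
      ENNReal.ofReal ((α₂ - 1) / (2 * α₁)) := by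
  refine dimH_le fun d hd => le_of_not_gt fun hlt => ?_
  have hs : (α₂ - 1) / (2 * α₁) < d := by
    rw [← ENNReal.ofReal_coe_nnreal] at hlt
    exact (ENNReal.ofReal_lt_ofReal_iff'.1 hlt).1
  exact ENNReal.zero_ne_top (hausdorffMeasure_setOf_logGrowthLiminf_eq_zero h1 h12 hs ▸ hd)
end

section
/- For 0 ≤ α < 1, the set {x ∈ Λ : liminf_{n→∞} (log a_n(x))/(log n) ≤ α} has Hausdorff dimension 0. -/
/-! If `liminf log aₙ / log n ≤ α < β < 1`, then `aₙ < n ^ β` for infinitely many `n`, and since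
the partial quotients are non-decreasing, all of `a₁, …, aₙ` are then at most `n ^ β`. There are
at most `(n + 1) ^ (n ^ β)` such monotone prefixes, and the points of `Λ` sharing a prefix of
length `n` lie in an interval of length `2 ^ (-⌊n/2⌋)`, because two steps of the Gauss map expand
distances by a factor of at least `4`. Since `n ^ β log (n + 1) = o(n)`, the series
`∑ (n + 1) ^ (n ^ β) 2 ^ (-d ⌊n/2⌋)` converges for every `d > 0`, so these covers give
`μH[d] = 0` for every `d > 0`. -/

open Filter MeasureTheory Set

open Real Topology
open scoped NNReal ENNReal Finset

theorem hausdorffMeasure_eq_zero_of_frequently_mem {X : Type*} {ι : ℕ → Type*} [EMetricSpace X]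
    [MeasurableSpace X] [BorelSpace X] {d : ℝ} (hd : 0 ≤ d) {s : Set X}
    (I : ∀ n, Finset (ι n)) (C : ∀ n, ι n → Set X) (r : ℕ → ℝ) (hr : Tendsto r atTop (𝓝 0))
    (hr_anti : Antitone r) (hC : ∀ n, ∀ i ∈ I n, Metric.ediam (C n i) ≤ ENNReal.ofReal (r n))
    (hsum : Summable fun n => (I n).card * r n ^ d)
    (hs : ∀ x ∈ s, ∃ᶠ n in atTop, ∃ i ∈ I n, x ∈ C n i) : μH[d] s = 0 := by
  have hr0 : ∀ n, 0 ≤ r n := fun n => hr_anti.le_of_tendsto hr n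
  set g : ℕ → ℝ≥0∞ := fun n => ENNReal.ofReal ((I n).card * r n ^ d)
  have hg_fin : ∑' n, g n ≠ ∞ := by
    rw [← ENNReal.ofReal_tsum_of_nonneg (fun n => by have := hr0 n; positivity) hsum]
    exact ENNReal.ofReal_ne_top
  -- At stage `N`, `s` is covered by the sets of level `≥ N`, whose `d`-sum is a tail of `∑ g`.
  have hsum_le : ∀ N, ∑' p : (n : ℕ) × I (N + n), Metric.ediam (C (N + p.1) p.2) ^ d
      ≤ ∑' n, g (n + N) := by
    intro N
    rw [ENNReal.tsum_sigma']
    refine ENNReal.tsum_le_tsum fun n => ?_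
    calc ∑' i : I (N + n), Metric.ediam (C (N + n) i) ^ d
        ≤ ∑' _ : I (N + n), ENNReal.ofReal (r (N + n)) ^ d :=
          ENNReal.tsum_le_tsum fun i => ENNReal.rpow_le_rpow (hC _ _ i.2) hd
      _ = g (n + N) := by
          simp only [g]
          rw [tsum_fintype, Finset.sum_const, Finset.card_univ, Fintype.card_coe, nsmul_eq_mul,
            add_comm, ENNReal.ofReal_mul (by positivity), ENNReal.ofReal_natCast,
            ENNReal.ofReal_rpow_of_nonneg (hr0 _) hd]
  have hcover : ∀ N, s ⊆ ⋃ p : (n : ℕ) × I (N + n), C (N + p.1) p.2 := by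
    intro N x hx
    obtain ⟨n, ⟨i, hi, hxi⟩, hn⟩ := ((hs x hx).and_eventually (eventually_ge_atTop N)).exists
    obtain ⟨k, rfl⟩ := Nat.exists_eq_add_of_le hn
    exact mem_iUnion.2 ⟨⟨k, i, hi⟩, hxi⟩
  refine le_antisymm ?_ bot_le
  calc μH[d] s
        ≤ liminf (fun N => ∑' p : (n : ℕ) × I (N + n), Metric.ediam (C (N + p.1) p.2) ^ d) atTop :=
        Measure.hausdorffMeasure_le_liminf_tsum d s (fun N => ENNReal.ofReal (r N))
          (ENNReal.ofReal_zero ▸ ENNReal.tendsto_ofReal hr) _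
          (Eventually.of_forall fun N p => (hC _ _ p.2.2).trans
            (ENNReal.ofReal_le_ofReal (hr_anti (Nat.le_add_right N p.1))))
          (Eventually.of_forall hcover)
    _ ≤ liminf (fun N => ∑' n, g (n + N)) atTop := liminf_le_liminf (Eventually.of_forall hsum_le)
    _ = 0 := (ENNReal.tendsto_sum_nat_add g hg_fin).liminf_eq

section MonotoneTuples

variable {α : Type*} [LinearOrder α] {n : ℕ}

theorem Monotone.le_iff_lt_card_filter_le {b : Fin n → α} (hb : Monotone b) (i : Fin n) (v : α) :
    b i ≤ v ↔ (i : ℕ) < #{j | b j ≤ v} := by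
  constructor
  · intro hle
    have hsub : Finset.Iic i ⊆ ({j | b j ≤ v} : Finset (Fin n)) := fun j hj => by
      simpa using (hb (Finset.mem_Iic.1 hj)).trans hle
    have := Finset.card_le_card hsub
    rw [Fin.card_Iic] at this
    omega
  · intro hlt
    by_contra! hvb
    have hsub : ({j | b j ≤ v} : Finset (Fin n)) ⊆ Finset.Iio i := fun j hj => by
      rw [Finset.mem_Iio]
      by_contra! hij
      exact (hvb.trans_le (hb hij)).not_ge (by simpa using hj)
    have := Finset.card_le_card hsub
    rw [Fin.card_Iio] at this
    omega

theorem Monotone.eq_of_card_filter_le_eq {b b' : Fin n → α} (hb : Monotone b) (hb' : Monotone b')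
    (h : ∀ v, #{j | b j ≤ v} = #{j | b' j ≤ v}) : b = b' := by
  funext i
  refine le_antisymm ?_ ?_
  · rw [hb.le_iff_lt_card_filter_le, h, ← hb'.le_iff_lt_card_filter_le]
  · rw [hb'.le_iff_lt_card_filter_le, ← h, ← hb.le_iff_lt_card_filter_le]

end MonotoneTuples

open Classical in
noncomputable def monotoneTuples (n M : ℕ) : Finset (Fin n → ℕ) :=
  {b ∈ Fintype.piFinset fun _ => Finset.Iic M | Monotone b}

theorem mem_monotoneTuples {n M : ℕ} {b : Fin n → ℕ} :
    b ∈ monotoneTuples n M ↔ Monotone b ∧ ∀ i, b i ≤ M := by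
  simp [monotoneTuples, and_comm]

/-- A monotone tuple bounded by `M` is determined by how many of its entries are `≤ v`,
for `v < M`. -/
theorem card_monotoneTuples_le (n M : ℕ) : #(monotoneTuples n M) ≤ (n + 1) ^ M := by
  let count (b : Fin n → ℕ) (v : Fin M) : Fin (n + 1) :=
    ⟨#{j | b j ≤ v}, Nat.lt_succ_of_le ((Finset.card_filter_le _ _).trans (Finset.card_fin n).le)⟩
  have hinj : Set.InjOn count (monotoneTuples n M) := by
    intro b hb b' hb' hbb'
    obtain ⟨hb, hbM⟩ := mem_monotoneTuples.1 hb
    obtain ⟨hb', hb'M⟩ := mem_monotoneTuples.1 hb'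
    refine hb.eq_of_card_filter_le_eq hb' fun v => ?_
    rcases lt_or_ge v M with hv | hv
    · exact congrArg Fin.val (congrFun hbb' ⟨v, hv⟩)
    · rw [Finset.filter_true_of_mem fun j _ => (hbM j).trans hv,
        Finset.filter_true_of_mem fun j _ => (hb'M j).trans hv]
  simpa using Finset.card_le_card_of_injOn count (fun _ _ => Finset.mem_univ _) hinj

theorem eventually_floor_rpow_mul_log_le {β : ℝ} (hβ0 : 0 ≤ β) (hβ1 : β < 1) {ε : ℝ}
    (hε : 0 < ε) : ∀ᶠ n : ℕ in atTop, (⌊(n : ℝ) ^ β⌋₊ : ℝ) * log (n + 1) ≤ ε * (n + 1) := by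
  have hlog := (isLittleO_log_rpow_atTop (sub_pos.2 hβ1)).def hε
  have hsucc : Tendsto (fun n : ℕ => (n : ℝ) + 1) atTop atTop :=
    tendsto_atTop_add_const_right _ 1 tendsto_natCast_atTop_atTop
  filter_upwards [hsucc.eventually hlog] with n hn
  have hpos : (0 : ℝ) < n + 1 := by positivity
  rw [norm_of_nonneg (log_nonneg (by simp)), norm_of_nonneg (by positivity)] at hn
  calc (⌊(n : ℝ) ^ β⌋₊ : ℝ) * log (n + 1) ≤ (n + 1) ^ β * (ε * (n + 1) ^ (1 - β)) := by
        gcongr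
        · exact log_nonneg (by simp)
        · exact (Nat.floor_le (by positivity)).trans (by gcongr; linarith)
    _ = ε * (n + 1) := by rw [mul_left_comm, ← rpow_add hpos, add_sub_cancel, rpow_one]

theorem summable_succ_pow_floor_rpow_mul_half_pow {β d : ℝ} (hβ0 : 0 ≤ β) (hβ1 : β < 1)
    (hd : 0 < d) :
    Summable fun n : ℕ => ((n : ℝ) + 1) ^ ⌊(n : ℝ) ^ β⌋₊ * ((1 / 2) ^ (n / 2)) ^ d := by
  set c := d * log 2
  have hc0 : 0 < c := mul_pos hd (log_pos one_lt_two)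
  have hρ : (0 : ℝ) < exp (-(c / 4)) := exp_pos _
  refine (summable_geometric_of_lt_one hρ.le
    (exp_lt_one_iff.2 (by linarith))).of_norm_bounded_eventually_nat ?_
  filter_upwards [eventually_floor_rpow_mul_log_le hβ0 hβ1 (show 0 < c / 8 by positivity),
    eventually_ge_atTop 5] with n hn hn5
  have hn5' : (5 : ℝ) ≤ n := by exact_mod_cast hn5
  have hhalf : (n : ℝ) ≤ 2 * (n / 2 : ℕ) + 1 := by exact_mod_cast (by omega : n ≤ 2 * (n / 2) + 1)
  rw [norm_of_nonneg (by positivity), ← exp_log (by positivity : (0 : ℝ) < _ * _), ← exp_nat_mul,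
    exp_le_exp, log_mul (by positivity) (by positivity), log_pow, log_rpow (by positivity),
    log_pow, one_div, log_inv]
  -- the exponent is at most `c (n + 1) / 8 - c (n - 1) / 2 ≤ -c n / 4` once `n ≥ 5`
  nlinarith

theorem cfA_one (x : ℝ) : cfA 1 x = ⌊x⁻¹⌋₊ := rfl

theorem one_le_cfA_one {x : ℝ} (hx : x ∈ Ioo (0 : ℝ) 1) : 1 ≤ cfA 1 x :=
  Nat.le_floor (by simpa using one_le_inv_iff₀.2 ⟨hx.1, hx.2.le⟩)

theorem cfA_gaussMap {n : ℕ} (hn : 1 ≤ n) (x : ℝ) : cfA n (gaussMap x) = cfA (n + 1) x := by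
  rw [cfA, cfA, ← Function.iterate_succ_apply, Nat.sub_add_comm hn]

theorem inv_eq_cfA_one_add_gaussMap {x : ℝ} (hx : 0 ≤ x) : x⁻¹ = cfA 1 x + gaussMap x := by
  rw [cfA_one, gaussMap, natCast_floor_eq_intCast_floor (inv_nonneg.2 hx), Int.floor_add_fract]

theorem mul_gaussMap_le_half {x : ℝ} (hx : x ∈ Ioo (0 : ℝ) 1) : x * gaussMap x ≤ 1 / 2 := by
  have h1 : (1 : ℝ) ≤ cfA 1 x := by exact_mod_cast one_le_cfA_one hx
  have h2 : gaussMap x < 1 := Int.fract_lt_one _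
  have hinv := inv_eq_cfA_one_add_gaussMap hx.1.le
  have : x * (cfA 1 x + gaussMap x) = 1 := by rw [← hinv, mul_inv_cancel₀ hx.1.ne']
  nlinarith [hx.1]

theorem abs_sub_eq_mul_abs_gaussMap_sub {x y : ℝ} (hx : 0 < x) (hy : 0 < y)
    (h : cfA 1 x = cfA 1 y) : |x - y| = x * y * |gaussMap x - gaussMap y| := by
  have hxy : x - y = x * y * (y⁻¹ - x⁻¹) := by field_simp
  rw [hxy, inv_eq_cfA_one_add_gaussMap hx.le, inv_eq_cfA_one_add_gaussMap hy.le, h, abs_mul,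
    abs_of_pos (mul_pos hx hy), add_sub_add_left_eq_sub, abs_sub_comm]

theorem monotone_cfA {x : ℝ} (hx : x ∈ Lam) : Monotone fun n => cfA (n + 1) x :=
  monotone_nat_of_le_succ fun n => hx.2 (n + 1) n.succ_pos

theorem gaussMap_mem_Lam {x : ℝ} (hx : x ∈ Lam) : gaussMap x ∈ Lam := by
  refine ⟨⟨(Int.fract_nonneg _).lt_of_ne fun h => ?_, Int.fract_lt_one _⟩, fun n hn => ?_⟩
  · have h2 : cfA (1 + 1) x = 0 := by
      change ⌊(gaussMap x)⁻¹⌋₊ = 0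
      rw [gaussMap, ← h, inv_zero, Nat.floor_zero]
    have := hx.2 1 le_rfl
    have := one_le_cfA_one hx.1
    omega
  · rw [cfA_gaussMap hn, cfA_gaussMap (by omega)]
    exact hx.2 (n + 1) (by omega)

theorem abs_sub_le_of_cfA_eq {x y : ℝ} (hx : x ∈ Lam) (hy : y ∈ Lam) (m : ℕ)
    (h : ∀ i < 2 * m, cfA (i + 1) x = cfA (i + 1) y) : |x - y| ≤ (1 / 2) ^ m := by
  induction m generalizing x y with
  | zero =>
    rw [pow_zero, abs_sub_le_iff]
    constructor <;> linarith [hx.1.1, hx.1.2, hy.1.1, hy.1.2]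
  | succ m ih =>
    have hGx := gaussMap_mem_Lam hx
    have hGy := gaussMap_mem_Lam hy
    have h1 : cfA 1 x = cfA 1 y := h 0 (by omega)
    have h2 : cfA 1 (gaussMap x) = cfA 1 (gaussMap y) := by
      rw [cfA_gaussMap le_rfl, cfA_gaussMap le_rfl]; exact h 1 (by omega)
    have hrec : |gaussMap (gaussMap x) - gaussMap (gaussMap y)| ≤ (1 / 2) ^ m := by
      refine ih (gaussMap_mem_Lam hGx) (gaussMap_mem_Lam hGy) fun i hi => ?_
      simp only [cfA_gaussMap (Nat.succ_pos _)]
      exact h (i + 2) (by omega)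
    rw [abs_sub_eq_mul_abs_gaussMap_sub hx.1.1 hy.1.1 h1,
      abs_sub_eq_mul_abs_gaussMap_sub hGx.1.1 hGy.1.1 h2]
    have hx2 := mul_gaussMap_le_half hx.1
    have hy2 := mul_gaussMap_le_half hy.1
    have hpos := mul_pos hy.1.1 hGy.1.1
    calc x * y * (gaussMap x * gaussMap y * |gaussMap (gaussMap x) - gaussMap (gaussMap y)|)
        = x * gaussMap x * (y * gaussMap y)
            * |gaussMap (gaussMap x) - gaussMap (gaussMap y)| := by ring
      _ ≤ 1 / 2 * (1 / 2) * (1 / 2) ^ m := by gcongr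
      _ ≤ (1 / 2) ^ (m + 1) := by rw [pow_succ]; nlinarith [pow_pos (one_half_pos (α := ℝ)) m]

noncomputable def lamCylinder (n : ℕ) (b : Fin n → ℕ) : Set ℝ :=
  {x | x ∈ Lam ∧ ∀ i : Fin n, cfA (i + 1) x = b i}

theorem ediam_lamCylinder_le (n : ℕ) (b : Fin n → ℕ) :
    Metric.ediam (lamCylinder n b) ≤ ENNReal.ofReal ((1 / 2) ^ (n / 2)) := by
  refine Metric.ediam_le fun x hx y hy => ?_
  rw [edist_dist, dist_eq]
  refine ENNReal.ofReal_le_ofReal (abs_sub_le_of_cfA_eq hx.1 hy.1 _ fun i hi => ?_)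
  have hi : i < n := by omega
  exact (hx.2 ⟨i, hi⟩).trans (hy.2 ⟨i, hi⟩).symm

theorem frequently_lt_rpow_of_liminf_log_div_log_lt {a : ℕ → ℕ} {β : ℝ}
    (h : liminf (fun n : ℕ => ((log (a n) / log n : ℝ) : EReal)) atTop < β) :
    ∃ᶠ n in atTop, (a n : ℝ) < (n : ℝ) ^ β := by
  refine ((frequently_lt_of_liminf_lt (h := h)).and_eventually (eventually_ge_atTop 2)).mono
    fun n ⟨hlt, hn⟩ => ?_
  have hn1 : (1 : ℝ) < n := by exact_mod_cast hn
  have hlog : log (a n) < β * log n := (div_lt_iff₀ (log_pos hn1)).1 (by exact_mod_cast hlt)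
  rcases Nat.eq_zero_or_pos (a n) with ha | ha
  · rw [ha, Nat.cast_zero]; positivity
  · exact (lt_rpow_iff_log_lt (by exact_mod_cast ha) (by linarith)).2 hlog

theorem hausdorffMeasure_setOf_frequently_cfA_lt_rpow_eq_zero {β d : ℝ} (hβ0 : 0 ≤ β)
    (hβ1 : β < 1) (hd : 0 < d) :
    μH[d] {x | x ∈ Lam ∧ ∃ᶠ n in atTop, (cfA n x : ℝ) < (n : ℝ) ^ β} = 0 := by
  refine hausdorffMeasure_eq_zero_of_frequently_mem hd.le
    (fun n => monotoneTuples n ⌊(n : ℝ) ^ β⌋₊) lamCylinder (fun n => (1 / 2 : ℝ) ^ (n / 2))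
    ((tendsto_pow_atTop_nhds_zero_of_lt_one (by norm_num) (by norm_num)).comp
      (Nat.tendsto_div_const_atTop two_ne_zero))
    ((pow_right_anti₀ (by norm_num) (by norm_num)).comp_monotone
      fun _ _ h => Nat.div_le_div_right h)
    (fun n b _ => ediam_lamCylinder_le n b) ?_ ?_
  · refine (summable_succ_pow_floor_rpow_mul_half_pow hβ0 hβ1 hd).of_nonneg_of_le
      (fun n => by positivity) fun n => ?_
    gcongr
    exact_mod_cast card_monotoneTuples_le _ _
  · rintro x ⟨hx, hfreq⟩
    refine (hfreq.and_eventually (eventually_ge_atTop 1)).mono fun n ⟨hlt, hn⟩ => ?_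
    refine ⟨fun j => cfA (j + 1) x, mem_monotoneTuples.2 ⟨fun i j hij => monotone_cfA hx hij,
      fun j => ?_⟩, hx, fun _ => rfl⟩
    calc cfA (j + 1) x ≤ cfA (n - 1 + 1) x := monotone_cfA hx (by omega)
      _ ≤ ⌊(n : ℝ) ^ β⌋₊ := by rw [Nat.sub_add_cancel hn]; exact Nat.le_floor hlt.le

theorem dimH_liminf_le_alpha_lt_one_general (α : ℝ) (h1 : α < 1) :
    dimH {x | x ∈ Lam ∧
        Filter.liminf (fun n : ℕ => ((Real.log (cfA n x) / Real.log n : ℝ) : EReal)) atTop ≤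
          (α : EReal)} = 0 := by
  obtain ⟨β, hαβ, hβ1⟩ := exists_between (max_lt h1 one_pos)
  have hsub : {x | x ∈ Lam ∧
      liminf (fun n : ℕ => ((log (cfA n x) / log n : ℝ) : EReal)) atTop ≤ (α : EReal)} ⊆
      {x | x ∈ Lam ∧ ∃ᶠ n in atTop, (cfA n x : ℝ) < (n : ℝ) ^ β} := fun x ⟨hx, hlim⟩ =>
    ⟨hx, frequently_lt_rpow_of_liminf_log_div_log_lt
      (hlim.trans_lt (EReal.coe_lt_coe_iff.2 ((le_max_left _ _).trans_lt hαβ)))⟩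
  refine nonpos_iff_eq_zero.1 (dimH_le fun d hd => ?_)
  rcases eq_or_ne d 0 with rfl | hd0
  · exact le_rfl
  · refine absurd hd (ne_top_of_le_ne_top ENNReal.zero_ne_top ?_)
    exact (measure_mono hsub).trans (hausdorffMeasure_setOf_frequently_cfA_lt_rpow_eq_zero
      ((le_max_right _ _).trans hαβ.le) hβ1 (by positivity)).le

/-- For `0 ≤ α < 1`, the set of `x ∈ Λ` with `liminf (log aₙ(x))/(log n) ≤ α`
has Hausdorff dimension `0`. -/
theorem dimH_liminf_le_alpha_lt_one (α : ℝ) (h0 : 0 ≤ α) (h1 : α < 1) :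
    dimH {x | x ∈ Lam ∧
        Filter.liminf (fun n : ℕ => ((Real.log (cfA n x) / Real.log n : ℝ) : EReal)) atTop ≤
          (α : EReal)} = 0 :=
  dimH_liminf_le_alpha_lt_one_general α h1
end

section
/- Let ψ : ℕ → ℝ⁺ be a function with ψ(n) → ∞. Then the set E(Λ,ψ) = {x ∈ Λ : lim_{n→∞} (log a_n(x))/ψ(n) = 1} is non-empty if and only if ψ is equivalent to a non-decreasing function (i.e., there exists a non-decreasing ψ̃ : ℕ → ℝ⁺ with ψ(n)/ψ̃(n) → 1). -/
open Filter MeasureTheory Set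

/-!
If `log a_n(x) ~ ψ(n)` with `(a_n(x))` non-decreasing, then `max (log a_n(x)) 1` is a
non-decreasing positive function equivalent to `ψ`. Conversely, if `φ ~ ψ` is non-decreasing and
positive, the point `x = [0; ⌈e^{φ(1)}⌉, ⌈e^{φ(2)}⌉, …]` lies in `Λ`, and
`φ(n) ≤ log a_n(x) ≤ φ(n) + 1`, so that `log a_n(x) ~ φ(n) ~ ψ(n)` because `ψ(n) → ∞`.
-/

lemma gaussMap_inv_natCast_add {m : ℕ} {y : ℝ} (hy : y ∈ Ico 0 1) :
    gaussMap (m + y)⁻¹ = y := by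
  rw [gaussMap, inv_inv, Int.fract_natCast_add, Int.fract_eq_self.2 hy]

lemma cfA_succ_eq_of_inv_eq {b : ℕ → ℕ} {x : ℕ → ℝ} (hx : ∀ k, x k ∈ Ico 0 1)
    (hrec : ∀ k, (x k)⁻¹ = b k + x (k + 1)) (n : ℕ) : cfA (n + 1) (x 0) = b n := by
  have horbit : ∀ k, gaussMap^[k] (x 0) = x k := by
    intro k
    induction k with
    | zero => rfl
    | succ k ih =>
      rw [Function.iterate_succ_apply', ih, ← inv_inv (x k), hrec, gaussMap_inv_natCast_add (hx _)]
  rw [cfA, Nat.add_sub_cancel, horbit, hrec, add_comm, Nat.floor_add_natCast (hx _).1,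
    Nat.floor_eq_zero.2 (hx _).2, zero_add]

section PrescribedPartialQuotients

/-- The finite continued fraction `[0; b k, b (k+1), …, b (k+N-1)]`. -/
noncomputable def cfTrunc (b : ℕ → ℕ) : ℕ → ℕ → ℝ
  | _, 0 => 0
  | k, N + 1 => ((b k : ℝ) + cfTrunc b (k + 1) N)⁻¹

variable {b : ℕ → ℕ}

lemma cfTrunc_mem_Icc (hb : ∀ n, 2 ≤ b n) (k N : ℕ) : cfTrunc b k N ∈ Icc (0 : ℝ) 1 := by
  induction N generalizing k with
  | zero => simp [cfTrunc]
  | succ N ih =>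
    have h2 : (2 : ℝ) ≤ b k := by exact_mod_cast hb k
    have h0 := (ih (k + 1)).1
    exact ⟨by rw [cfTrunc]; positivity, inv_le_one_of_one_le₀ (by linarith)⟩

lemma abs_inv_add_sub_inv_add_le_s10 {c s t : ℝ} (hc : 2 ≤ c) (hs : 0 ≤ s) (ht : 0 ≤ t) :
    |(c + s)⁻¹ - (c + t)⁻¹| ≤ |s - t| / 4 := by
  have hcs : 0 < c + s := by linarith
  have hct : 0 < c + t := by linarith
  have hprod : 4 ≤ (c + s) * (c + t) := by nlinarith
  rw [inv_sub_inv hcs.ne' hct.ne', add_sub_add_left_eq_sub, abs_div, abs_sub_comm,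
    abs_of_pos (mul_pos hcs hct)]
  exact div_le_div_of_nonneg_left (abs_nonneg _) (by norm_num) hprod

lemma abs_cfTrunc_add_sub_le (hb : ∀ n, 2 ≤ b n) (N : ℕ) :
    ∀ k M, |cfTrunc b k (N + M) - cfTrunc b k N| ≤ (1 / 4 : ℝ) ^ N := by
  induction N with
  | zero =>
    intro k M
    obtain ⟨h0, h1⟩ := cfTrunc_mem_Icc hb k M
    simpa [cfTrunc, abs_of_nonneg h0] using h1
  | succ N ih =>
    intro k M
    rw [Nat.add_right_comm, cfTrunc, cfTrunc]
    calc _ ≤ |cfTrunc b (k + 1) (N + M) - cfTrunc b (k + 1) N| / 4 :=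
          abs_inv_add_sub_inv_add_le_s10 (by exact_mod_cast hb k) (cfTrunc_mem_Icc hb _ _).1
            (cfTrunc_mem_Icc hb _ _).1
      _ ≤ (1 / 4 : ℝ) ^ (N + 1) := by rw [pow_succ]; linarith [ih (k + 1) M]

lemma cauchySeq_cfTrunc (hb : ∀ n, 2 ≤ b n) (k : ℕ) : CauchySeq (cfTrunc b k) :=
  cauchySeq_of_le_geometric (1 / 4 : ℝ) 1 (by norm_num) fun N => by
    rw [Real.dist_eq, one_mul, abs_sub_comm]
    exact abs_cfTrunc_add_sub_le hb N k 1

lemma exists_seq_inv_eq (hb : ∀ n, 2 ≤ b n) :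
    ∃ x : ℕ → ℝ, (∀ k, 0 ≤ x k) ∧ ∀ k, (x k)⁻¹ = b k + x (k + 1) := by
  choose x hx using fun k => cauchySeq_tendsto_of_complete (cauchySeq_cfTrunc hb k)
  have hnonneg : ∀ k, 0 ≤ x k := fun k =>
    ge_of_tendsto (hx k) (Eventually.of_forall fun N => (cfTrunc_mem_Icc hb k N).1)
  refine ⟨x, hnonneg, fun k => ?_⟩
  have hne : (b k : ℝ) + x (k + 1) ≠ 0 := by
    have := hnonneg (k + 1)
    have : (2 : ℝ) ≤ b k := by exact_mod_cast hb k
    positivity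
  have hrec : Tendsto (fun N => cfTrunc b k (N + 1)) atTop (nhds ((b k : ℝ) + x (k + 1))⁻¹) :=
    (tendsto_const_nhds.add (hx (k + 1))).inv₀ hne
  rw [tendsto_nhds_unique ((hx k).comp (tendsto_add_atTop_nat 1)) hrec, inv_inv]

lemma exists_mem_Ioo_cfA_succ_eq (hb : ∀ n, 2 ≤ b n) :
    ∃ x ∈ Ioo (0 : ℝ) 1, ∀ n, cfA (n + 1) x = b n := by
  obtain ⟨x, hnonneg, hrec⟩ := exists_seq_inv_eq hb
  have hmem : ∀ k, x k ∈ Ioo 0 1 := by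
    intro k
    have h2 : (2 : ℝ) ≤ b k := by exact_mod_cast hb k
    have hinv : 1 < (x k)⁻¹ := by linarith [hrec k, hnonneg (k + 1)]
    have hpos : 0 < x k := inv_pos.1 (by linarith)
    exact ⟨hpos, (one_lt_inv₀ hpos).1 hinv⟩
  exact ⟨x 0, hmem 0, cfA_succ_eq_of_inv_eq (fun k => Ioo_subset_Ico_self (hmem k)) hrec⟩

end PrescribedPartialQuotients

-- `cfA 0 x = cfA 1 x` because of the truncated subtraction `0 - 1 = 0` in `cfA`.
lemma monotone_cfA_of_mem_Lam {x : ℝ} (hx : x ∈ Lam) : Monotone fun n => cfA n x := by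
  refine monotone_nat_of_le_succ fun n => ?_
  rcases Nat.eq_zero_or_pos n with rfl | hn
  · exact le_rfl
  · exact hx.2 n hn

lemma Real.monotone_log_natCast : Monotone fun n : ℕ => Real.log n := by
  intro m n hmn
  rcases Nat.eq_zero_or_pos m with rfl | hm
  · simpa using Real.log_natCast_nonneg n
  · exact Real.log_le_log (by exact_mod_cast hm) (by exact_mod_cast hmn)

lemma le_log_natCeil_exp (t : ℝ) : t ≤ Real.log ⌈Real.exp t⌉₊ := by
  calc t = Real.log (Real.exp t) := (Real.log_exp t).symm
    _ ≤ Real.log ⌈Real.exp t⌉₊ := Real.log_le_log (Real.exp_pos t) (Nat.le_ceil _)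

lemma log_natCeil_exp_le {t : ℝ} (ht : 0 ≤ t) : Real.log ⌈Real.exp t⌉₊ ≤ t + 1 := by
  have hexp : 1 ≤ Real.exp t := Real.one_le_exp ht
  have he : 2 ≤ Real.exp 1 := by linarith [Real.add_one_le_exp (1 : ℝ)]
  have hceil : (⌈Real.exp t⌉₊ : ℝ) ≤ Real.exp (t + 1) := by
    calc (⌈Real.exp t⌉₊ : ℝ) ≤ Real.exp t + 1 := (Nat.ceil_lt_add_one (by positivity)).le
      _ ≤ Real.exp t * Real.exp 1 := by nlinarith
      _ = Real.exp (t + 1) := (Real.exp_add t 1).symm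
  calc Real.log ⌈Real.exp t⌉₊ ≤ Real.log (Real.exp (t + 1)) :=
        Real.log_le_log (by linarith [Nat.le_ceil (Real.exp t)]) hceil
    _ = t + 1 := Real.log_exp _

lemma two_le_natCeil_exp {t : ℝ} (ht : 0 < t) : 2 ≤ ⌈Real.exp t⌉₊ :=
  Nat.lt_ceil.2 (by exact_mod_cast Real.one_lt_exp_iff.2 ht)

section Asymptotics

variable {ι : Type*} {l : Filter ι} {f g ψ : ι → ℝ}

lemma Filter.Tendsto.div_of_abs_sub_le {a C : ℝ} (hg : Tendsto (fun i => g i / ψ i) l (nhds a))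
    (hψ : Tendsto ψ l atTop) (hfg : ∀ᶠ i in l, |f i - g i| ≤ C) :
    Tendsto (fun i => f i / ψ i) l (nhds a) := by
  have hsmall : Tendsto (fun i => (ψ i)⁻¹ * (f i - g i)) l (nhds 0) :=
    (tendsto_inv_atTop_zero.comp hψ).zero_mul_isBoundedUnder_le
      (isBoundedUnder_of_eventually_le (a := C) (by simpa using hfg))
  refine (by simpa using hg.add hsmall : Tendsto _ l (nhds a)).congr' ?_
  filter_upwards [hψ.eventually_gt_atTop 0] with i hi
  field_simp
  ring

lemma exists_pos_monotone_tendsto_div [Preorder ι] {L : ι → ℝ} (hL : Monotone L)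
    (hLψ : Tendsto (fun i => L i / ψ i) atTop (nhds 1)) (hψ : Tendsto ψ atTop atTop) :
    ∃ φ : ι → ℝ, (∀ i, 0 < φ i) ∧ Monotone φ ∧ Tendsto (fun i => ψ i / φ i) atTop (nhds 1) := by
  have hLtop : Tendsto L atTop atTop := by
    refine (hLψ.pos_mul_atTop one_pos hψ).congr' ?_
    filter_upwards [hψ.eventually_gt_atTop 0] with i hi
    exact div_mul_cancel₀ _ hi.ne'
  refine ⟨fun i => max (L i) 1, fun i => one_pos.trans_le (le_max_right _ _),
    fun i j hij => max_le_max (hL hij) le_rfl, ?_⟩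
  have hψL : Tendsto (fun i => ψ i / L i) atTop (nhds 1) := by
    simpa using hLψ.inv₀ one_ne_zero
  refine hψL.congr' ?_
  filter_upwards [hLtop.eventually_ge_atTop 1] with i hi
  rw [max_eq_left hi]

end Asymptotics

theorem E_Lam_nonempty_iff_general (ψ : ℕ → ℝ)
    (hψ : Tendsto ψ atTop atTop) :
    ({x | x ∈ Lam ∧
        Tendsto (fun n : ℕ => Real.log (cfA n x) / ψ n) atTop (nhds 1)}.Nonempty) ↔
      ∃ φ : ℕ → ℝ, (∀ n, 0 < φ n) ∧ Monotone φ ∧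
        Tendsto (fun n : ℕ => ψ n / φ n) atTop (nhds 1) := by
  constructor
  · rintro ⟨x, hx, hlim⟩
    exact exists_pos_monotone_tendsto_div
      (Real.monotone_log_natCast.comp (monotone_cfA_of_mem_Lam hx)) hlim hψ
  · rintro ⟨φ, hφpos, hφmono, hψφ⟩
    obtain ⟨x, hx01, hx⟩ := exists_mem_Ioo_cfA_succ_eq (b := fun n => ⌈Real.exp (φ (n + 1))⌉₊)
      fun n => two_le_natCeil_exp (hφpos _)
    have hcfA : ∀ n, 1 ≤ n → cfA n x = ⌈Real.exp (φ n)⌉₊ := fun n hn => by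
      obtain ⟨m, rfl⟩ := Nat.exists_eq_add_of_le' hn
      exact hx m
    refine ⟨x, ⟨hx01, fun n hn => ?_⟩, ?_⟩
    · rw [hcfA n hn, hcfA (n + 1) (by omega)]
      exact Nat.ceil_mono (Real.exp_monotone (hφmono n.le_succ))
    · have hφψ : Tendsto (fun n => φ n / ψ n) atTop (nhds 1) := by
        simpa using hψφ.inv₀ one_ne_zero
      refine hφψ.div_of_abs_sub_le (C := 1) hψ ?_
      filter_upwards [eventually_ge_atTop 1] with n hn
      rw [hcfA n hn, abs_le]
      constructor <;> linarith [le_log_natCeil_exp (φ n), log_natCeil_exp_le (hφpos n).le]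

/-- `E(Λ,ψ)` is non-empty iff `ψ` is equivalent to a non-decreasing function. -/
theorem E_Lam_nonempty_iff (ψ : ℕ → ℝ) (hψpos : ∀ n, 0 < ψ n)
    (hψ : Tendsto ψ atTop atTop) :
    ({x | x ∈ Lam ∧
        Tendsto (fun n : ℕ => Real.log (cfA n x) / ψ n) atTop (nhds 1)}.Nonempty) ↔
      ∃ φ : ℕ → ℝ, (∀ n, 0 < φ n) ∧ Monotone φ ∧
        Tendsto (fun n : ℕ => ψ n / φ n) atTop (nhds 1) :=
  E_Lam_nonempty_iff_general ψ hψ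
end

section
/- Let α > 1 and t_n = 2⌊n^{α-1}⌋. Then the set E({t_n}) = {x ∈ (0,1) : n t_n ≤ a_n(x) < (n+1) t_n for all n ≥ 1} is contained in {x ∈ Λ : lim_{n→∞} (log a_n(x))/(α log n) = 1}, and the quantity ξ = limsup_{n→∞} (2 log(n+1)! + log t_{n+1}) / log(t_1 ⋯ t_n) equals 2/(α-1). -/
open Filter MeasureTheory Set

/-!
On `E({tₙ})` we have `n^α ≤ n tₙ ≤ aₙ < (n+1) tₙ ≤ 4 n^α`, so `log aₙ = α log n + O(1)`, and
`aₙ < (n+1) tₙ ≤ (n+1) tₙ₊₁ ≤ aₙ₊₁` because `t` is non-decreasing.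
For `ξ`, `log tₖ = (α-1) log k + O(1)` gives `log (t₁ ⋯ tₙ) = (α-1) log n! + O(n)`, while the
numerator is `2 log n! + O(n)`. Since `n = o(log n!)` by Stirling's bound, the ratio converges to
`2/(α-1)`, which is then also its limsup.
-/

open Asymptotics Real
open scoped Nat Topology

lemma le_two_mul_natFloor {y : ℝ} (hy : 1 ≤ y) : y ≤ 2 * ⌊y⌋₊ := by
  have : (1 : ℝ) ≤ ⌊y⌋₊ := by exact_mod_cast Nat.one_le_floor_iff y |>.2 hy
  linarith [Nat.lt_floor_add_one y]

lemma log_factorial_eq_sum (n : ℕ) : log n ! = ∑ k ∈ Finset.Icc 1 n, log k := by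
  rw [← Finset.prod_Ico_id_eq_factorial, Finset.Ico_add_one_right_eq_Icc, Nat.cast_prod,
    Real.log_prod]
  intro k hk
  have : 1 ≤ k := (Finset.mem_Icc.1 hk).1
  positivity

lemma isLittleO_natCast_log_factorial :
    (fun n : ℕ => (n : ℝ)) =o[atTop] fun n => log n ! := by
  have hlog : Tendsto (fun n : ℕ => log n - 1) atTop atTop :=
    tendsto_atTop_add_const_right _ _ (tendsto_log_atTop.comp tendsto_natCast_atTop_atTop)
  have hstirling : ∀ᶠ n : ℕ in atTop, n * (log n - 1) ≤ log n ! := by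
    filter_upwards [eventually_ge_atTop 1] with n hn
    have := Stirling.le_log_factorial_stirling (n := n) (by omega)
    have : 0 ≤ log n := log_natCast_nonneg n
    have : 0 ≤ log (2 * π) := log_nonneg (by linarith [pi_gt_three])
    linarith
  have hsmall : (fun n : ℕ => (n : ℝ)) =o[atTop] fun n => n * (log n - 1) := by
    simpa using (isBigO_refl (fun n : ℕ => (n : ℝ)) atTop).mul_isLittleO
      ((isLittleO_one_left_iff ℝ).2 (tendsto_norm_atTop_atTop.comp hlog))
  refine hsmall.trans_isBigO (IsBigO.of_bound' ?_)
  filter_upwards [hstirling, hlog.eventually_gt_atTop 0] with n hle hpos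
  have hprod : 0 ≤ (n : ℝ) * (log n - 1) := by positivity
  rwa [norm_of_nonneg hprod, norm_of_nonneg (hprod.trans hle)]

noncomputable def twoFloorRpow (β : ℝ) (n : ℕ) : ℕ := 2 * ⌊(n : ℝ) ^ β⌋₊

section twoFloorRpow

variable {β : ℝ}

lemma twoFloorRpow_mono (hβ : 0 ≤ β) : Monotone (twoFloorRpow β) := by
  intro m n hmn
  unfold twoFloorRpow
  gcongr

lemma twoFloorRpow_pos (hβ : 0 ≤ β) {k : ℕ} (hk : 1 ≤ k) : 0 < twoFloorRpow β k := by
  have : 1 ≤ (k : ℝ) ^ β := one_le_rpow (by exact_mod_cast hk) hβ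
  unfold twoFloorRpow
  have := Nat.one_le_floor_iff _ |>.2 this
  omega

lemma rpow_le_twoFloorRpow (hβ : 0 ≤ β) {k : ℕ} (hk : 1 ≤ k) :
    (k : ℝ) ^ β ≤ twoFloorRpow β k := by
  unfold twoFloorRpow
  push_cast
  exact le_two_mul_natFloor (one_le_rpow (by exact_mod_cast hk) hβ)

lemma twoFloorRpow_le_two_mul_rpow (k : ℕ) : (twoFloorRpow β k : ℝ) ≤ 2 * (k : ℝ) ^ β := by
  unfold twoFloorRpow
  push_cast
  gcongr
  exact Nat.floor_le (by positivity)

lemma abs_log_twoFloorRpow_sub_le (hβ : 0 ≤ β) {k : ℕ} (hk : 1 ≤ k) :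
    |log (twoFloorRpow β k) - β * log k| ≤ log 2 := by
  have hk0 : (0 : ℝ) < k := by exact_mod_cast hk
  have ht : (0 : ℝ) < twoFloorRpow β k := by exact_mod_cast twoFloorRpow_pos hβ hk
  have hlow := log_le_log (by positivity) (rpow_le_twoFloorRpow hβ hk)
  have hupp := log_le_log ht (twoFloorRpow_le_two_mul_rpow (β := β) k)
  rw [log_rpow hk0] at hlow
  rw [log_mul two_ne_zero (by positivity), log_rpow hk0] at hupp
  rw [abs_le]
  constructor <;> linarith [log_nonneg one_le_two]

lemma isEquivalent_log_prod_twoFloorRpow (hβ : 0 < β) :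
    (fun n : ℕ => log (∏ k ∈ Finset.Icc 1 n, (twoFloorRpow β k : ℝ))) ~[atTop]
      fun n => β * log n ! := by
  refine (IsBigO.of_bound (log 2) (Eventually.of_forall fun n => ?_)).trans_isLittleO
    (isLittleO_natCast_log_factorial.const_mul_right hβ.ne')
  have hpos (k : ℕ) (hk : k ∈ Finset.Icc 1 n) : (twoFloorRpow β k : ℝ) ≠ 0 := by
    exact_mod_cast (twoFloorRpow_pos hβ.le (Finset.mem_Icc.1 hk).1).ne'
  rw [Pi.sub_apply, log_prod hpos, log_factorial_eq_sum, Finset.mul_sum, ← Finset.sum_sub_distrib]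
  calc ‖∑ k ∈ Finset.Icc 1 n, (log (twoFloorRpow β k) - β * log k)‖
      ≤ ∑ k ∈ Finset.Icc 1 n, ‖log (twoFloorRpow β k) - β * log k‖ := norm_sum_le _ _
    _ ≤ ∑ k ∈ Finset.Icc 1 n, log 2 := Finset.sum_le_sum fun k hk =>
        abs_log_twoFloorRpow_sub_le hβ.le (Finset.mem_Icc.1 hk).1
    _ = log 2 * ‖(n : ℝ)‖ := by simp [mul_comm]

lemma isEquivalent_xi_numerator (hβ : 0 ≤ β) :
    (fun n : ℕ => 2 * log (n + 1)! + log (twoFloorRpow β (n + 1))) ~[atTop]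
      fun n => 2 * log n ! := by
  refine (IsBigO.of_bound (2 + log 2 + β) ?_).trans_isLittleO
    (isLittleO_natCast_log_factorial.const_mul_right two_ne_zero)
  filter_upwards [eventually_ge_atTop 1] with n hn
  have hn1 : (1 : ℝ) ≤ n := by exact_mod_cast hn
  have hfact : log ((n + 1)! : ℕ) = log ((n : ℝ) + 1) + log n ! := by
    rw [Nat.factorial_succ, Nat.cast_mul, log_mul (by positivity) (by positivity)]
    push_cast
    ring
  have hlog : log ((n : ℝ) + 1) ≤ n := by
    linarith [log_le_sub_one_of_pos (by positivity : (0 : ℝ) < n + 1)]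
  have hlog0 : 0 ≤ log ((n : ℝ) + 1) := log_nonneg (by linarith)
  have hβlog : β * log ((n : ℝ) + 1) ≤ β * n := by gcongr
  have hlog2 : log 2 ≤ log 2 * n := le_mul_of_one_le_right (log_nonneg one_le_two) hn1
  have ht := abs_log_twoFloorRpow_sub_le hβ (Nat.le_add_left 1 n)
  push_cast at ht
  obtain ⟨ht_ge, ht_le⟩ := abs_le.1 ht
  rw [Pi.sub_apply, hfact, norm_of_nonneg (by positivity : (0 : ℝ) ≤ n), Real.norm_eq_abs, abs_le]
  constructor <;> linarith [mul_nonneg hβ hlog0, mul_nonneg hβ (by positivity : (0 : ℝ) ≤ n)]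

lemma tendsto_xi (hβ : 0 < β) :
    Tendsto (fun n : ℕ => (2 * log (n + 1)! + log (twoFloorRpow β (n + 1))) /
      log (∏ k ∈ Finset.Icc 1 n, (twoFloorRpow β k : ℝ))) atTop (𝓝 (2 / β)) := by
  have hconst : Tendsto (fun n : ℕ => 2 * log n ! / (β * log n !)) atTop (𝓝 (2 / β)) := by
    refine tendsto_const_nhds.congr' ?_
    filter_upwards [eventually_ge_atTop 2] with n hn
    have : 0 < log n ! := log_pos (by exact_mod_cast Nat.one_lt_factorial.2 hn)
    field_simp
  exact ((isEquivalent_xi_numerator hβ.le).div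
    (isEquivalent_log_prod_twoFloorRpow hβ)).symm.tendsto_nhds hconst

end twoFloorRpow

lemma abs_log_sub_le_of_mem_Ico {α : ℝ} (hα : 1 ≤ α) {n a : ℕ} (hn : 1 ≤ n)
    (ha : a ∈ Set.Ico (n * twoFloorRpow (α - 1) n) ((n + 1) * twoFloorRpow (α - 1) n)) :
    |log a - α * log n| ≤ log 4 := by
  have hn0 : (0 : ℝ) < n := by exact_mod_cast hn
  have hn1 : (1 : ℝ) ≤ n := by exact_mod_cast hn
  have hsplit : (n : ℝ) ^ α = n * (n : ℝ) ^ (α - 1) := by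
    rw [← rpow_one_add' hn0.le (by linarith), add_sub_cancel]
  have hpow := rpow_pos_of_pos hn0 (α - 1)
  have hlow : (n : ℝ) ^ α ≤ a := by
    have hle : ((n * twoFloorRpow (α - 1) n : ℕ) : ℝ) ≤ a := by exact_mod_cast ha.1
    push_cast at hle
    rw [hsplit]
    nlinarith [rpow_le_twoFloorRpow (by linarith : 0 ≤ α - 1) hn]
  have hupp : (a : ℝ) ≤ 4 * n ^ α := by
    have hle : (a : ℝ) ≤ ((n + 1) * twoFloorRpow (α - 1) n : ℕ) := by exact_mod_cast ha.2.le
    push_cast at hle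
    rw [hsplit]
    nlinarith [twoFloorRpow_le_two_mul_rpow (β := α - 1) n]
  have hαpow := rpow_pos_of_pos hn0 α
  have h1 := log_le_log hαpow hlow
  have h2 := log_le_log (hαpow.trans_le hlow) hupp
  rw [log_rpow hn0] at h1
  rw [log_mul (by norm_num) hαpow.ne', log_rpow hn0] at h2
  rw [abs_le]
  constructor <;> linarith [log_nonneg (by norm_num : (1 : ℝ) ≤ 4)]

lemma isEquivalent_log_of_mem_Ico {α : ℝ} (hα : 1 ≤ α) {a : ℕ → ℕ}
    (ha : ∀ n, 1 ≤ n →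
      a n ∈ Set.Ico (n * twoFloorRpow (α - 1) n) ((n + 1) * twoFloorRpow (α - 1) n)) :
    (fun n => log (a n : ℝ)) ~[atTop] fun n => α * log n := by
  have hlog : Tendsto (fun n : ℕ => α * log n) atTop atTop :=
    (tendsto_log_atTop.comp tendsto_natCast_atTop_atTop).const_mul_atTop (by linarith)
  refine IsBigO.trans_isLittleO (g := fun _ => log 4) (IsBigO.of_bound' ?_)
    (isLittleO_const_left.2 (Or.inr (tendsto_norm_atTop_atTop.comp hlog)))
  filter_upwards [eventually_ge_atTop 1] with n hn
  rw [norm_of_nonneg (log_nonneg (by norm_num))]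
  exact abs_log_sub_le_of_mem_Ico hα hn (ha n hn)

/-- For `α > 1` and `tₙ = 2⌊n^{α-1}⌋`, the set `𝔼({tₙ})` is contained in
`{x ∈ Λ : lim (log aₙ(x))/(α log n) = 1}`, and
`ξ = limsup (2 log(n+1)! + log t_{n+1}) / log(t₁ ⋯ tₙ) = 2/(α-1)`. -/
theorem E_seq_subset_and_xi (α : ℝ) (hα : 1 < α)
    (t : ℕ → ℕ) (ht : ∀ n, t n = 2 * ⌊(n : ℝ) ^ (α - 1)⌋₊) :
    {x | x ∈ Set.Ioo (0:ℝ) 1 ∧ ∀ n : ℕ, 1 ≤ n →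
        n * t n ≤ cfA n x ∧ cfA n x < (n + 1) * t n} ⊆
      {x | x ∈ Lam ∧
        Tendsto (fun n : ℕ => Real.log (cfA n x) / (α * Real.log n)) atTop (nhds 1)} ∧
    Filter.limsup
        (fun n : ℕ =>
          (((2 * Real.log (Nat.factorial (n + 1)) + Real.log (t (n + 1))) /
            Real.log (∏ k ∈ Finset.Icc 1 n, (t k : ℝ)) : ℝ) : EReal)) atTop =
      ((2 / (α - 1) : ℝ) : EReal) := by
  obtain rfl : t = twoFloorRpow (α - 1) := funext ht
  refine ⟨fun x ⟨hx, ha⟩ => ⟨⟨hx, fun n hn => ?_⟩, ?_⟩, ?_⟩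
  · calc cfA n x ≤ (n + 1) * twoFloorRpow (α - 1) n := (ha n hn).2.le
      _ ≤ (n + 1) * twoFloorRpow (α - 1) (n + 1) :=
        Nat.mul_le_mul_left _ (twoFloorRpow_mono (by linarith) n.le_succ)
      _ ≤ cfA (n + 1) x := (ha (n + 1) (by omega)).1
  · refine (isEquivalent_iff_tendsto_one ?_).1 (isEquivalent_log_of_mem_Ico hα.le ha)
    filter_upwards [eventually_ge_atTop 2] with n hn
    have : 0 < log n := log_pos (by exact_mod_cast hn)
    positivity
  · exact (EReal.tendsto_coe.2 (tendsto_xi (sub_pos.2 hα))).limsup_eq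
end
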